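/- arXiv:math/9906142 — 4 statements merged into one kernel-verified Lean document; each statement's English description precedes it below -/
import Mathlib

section
/- Let C ⊆ ℝᵏ (k ≥ 1) be an open convex cone containing no entire affine line, and let x₀ ∈ C. Then the set C ∩ (x₀ − C) = { y ∈ C : x₀ − y ∈ C } is a nonempty, open, bounded subset of ℝᵏ. -/
section aux

variable {E : Type*} [NormedAddCommGroup E] [NormedSpace ℝ E]

lemma aux_add_smul_mem {C : Set E} (hconv : Convex ℝ C)
    (hcone : ∀ x ∈ C, ∀ t : ℝ, 0 < t → t • x ∈ C)
    {p w : E} (hp : p ∈ C) (hw : w ∈ C) {s : ℝ} (hs : 0 < s) :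
    p + s • w ∈ C := by
  have h1s : (0:ℝ) < 1 + s := by linarith
  have hcomb : (1 / (1 + s)) • p + (s / (1 + s)) • w ∈ C := by
    apply hconv hp hw (by positivity) (by positivity)
    field_simp
  have := hcone _ hcomb (1 + s) h1s
  have heq : (1 + s) • ((1 / (1 + s)) • p + (s / (1 + s)) • w) = p + s • w := by
    rw [smul_add, smul_smul, smul_smul]
    rw [mul_one_div, div_self h1s.ne', mul_div_cancel₀ _ h1s.ne', one_smul]
  rwa [heq] at this

lemma aux_add_smul_closure_mem {C : Set E} (hopen : IsOpen C) (hconv : Convex ℝ C)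
    (hcone : ∀ x ∈ C, ∀ t : ℝ, 0 < t → t • x ∈ C)
    {p v : E} (hp : p ∈ C) (hv : v ∈ closure C) {s : ℝ} (hs : 0 ≤ s) :
    p + s • v ∈ C := by
  rcases hs.lt_or_eq with hs | hs
  · obtain ⟨δ, hδ, hball⟩ := Metric.isOpen_iff.1 hopen p hp
    obtain ⟨w, hwC, hwv⟩ := Metric.mem_closure_iff.1 hv (δ / s) (by positivity)
    have hp' : p + s • (v - w) ∈ C := by
      apply hball
      simp only [Metric.mem_ball, dist_self_add_left, norm_smul, Real.norm_eq_abs,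
        abs_of_pos hs]
      rw [← dist_eq_norm]
      calc s * dist v w < s * (δ / s) := by
            exact mul_lt_mul_of_pos_left hwv hs
        _ = δ := by field_simp
    have := aux_add_smul_mem hconv hcone hp' hwC hs
    have heq : p + s • (v - w) + s • w = p + s • v := by
      rw [smul_sub]; abel
    rwa [heq] at this
  · simpa [← hs] using hp

end aux

/-- Let `C ⊆ ℝᵏ` (`k ≥ 1`) be an open convex cone containing no
entire affine line, and let `x₀ ∈ C`. Then `C ∩ (x₀ − C)` is a nonempty, open,
bounded subset of `ℝᵏ`. -/
theorem cone_inter_shift_bounded (k : ℕ) (hk : 1 ≤ k) (C : Set (Fin k → ℝ))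
    (hne : C.Nonempty) (hopen : IsOpen C) (hconv : Convex ℝ C)
    (hcone : ∀ x ∈ C, ∀ t : ℝ, 0 < t → t • x ∈ C)
    (hline : ¬ ∃ p v : Fin k → ℝ, v ≠ 0 ∧ ∀ t : ℝ, p + t • v ∈ C)
    (x₀ : Fin k → ℝ) (hx₀ : x₀ ∈ C) :
    ({y ∈ C | x₀ - y ∈ C}).Nonempty ∧ IsOpen {y ∈ C | x₀ - y ∈ C} ∧
      Bornology.IsBounded {y ∈ C | x₀ - y ∈ C} := by
  refine ⟨⟨(1/2 : ℝ) • x₀, ?_, ?_⟩, ?_, ?_⟩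
  · exact hcone _ hx₀ _ (by norm_num)
  · have : x₀ - (1/2 : ℝ) • x₀ = (1/2 : ℝ) • x₀ := by
      rw [sub_eq_iff_eq_add, ← add_smul]; norm_num
    show x₀ - (1/2 : ℝ) • x₀ ∈ C
    rw [this]
    exact hcone _ hx₀ _ (by norm_num)
  · have : {y ∈ C | x₀ - y ∈ C} = C ∩ (fun y => x₀ - y) ⁻¹' C := rfl
    rw [this]
    exact hopen.inter (hopen.preimage (by continuity))
  · -- boundedness
    by_contra hb
    rw [isBounded_iff_forall_norm_le] at hb
    push_neg at hb
    choose y hyS hy using hb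
    have hynorm : ∀ n : ℕ, (n : ℝ) < ‖y n‖ := fun n => hy n
    have hypos : ∀ n : ℕ, 0 < ‖y (n+1)‖ := fun n =>
      lt_of_le_of_lt (by positivity) (hy (n+1))
    set z : ℕ → Fin k → ℝ := fun n => y (n+1) with hz
    have hznorm : ∀ n : ℕ, (n : ℝ) < ‖z n‖ := by
      intro n
      have h := hynorm (n+1)
      push_cast at h
      show (n : ℝ) < ‖y ((n:ℝ)+1)‖
      linarith
    have hzpos : ∀ n : ℕ, 0 < ‖z n‖ := hypos
    set u : ℕ → Fin k → ℝ := fun n => ‖z n‖⁻¹ • z n with hu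
    have huC : ∀ n, u n ∈ C := fun n =>
      hcone _ (hyS (n+1)).1 _ (inv_pos.2 (hzpos n))
    have husphere : ∀ n, u n ∈ Metric.sphere (0 : Fin k → ℝ) 1 := by
      intro n
      simp [hu, norm_smul, abs_of_pos (inv_pos.2 (hzpos n)),
        inv_mul_cancel₀ (hzpos n).ne']
    obtain ⟨v, hv, φ, hφ, hvlim⟩ :=
      (isCompact_sphere (0 : Fin k → ℝ) 1).tendsto_subseq husphere
    have hvnorm : ‖v‖ = 1 := by simpa using hv
    have hvne : v ≠ 0 := by intro h; rw [h] at hvnorm; simp at hvnorm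
    have hvcl : v ∈ closure C :=
      mem_closure_of_tendsto hvlim (Filter.Eventually.of_forall fun n => huC (φ n))
    -- inverse norms tend to zero along the subsequence
    have hinv0 : Filter.Tendsto (fun n => ‖z (φ n)‖⁻¹) Filter.atTop (nhds 0) := by
      apply squeeze_zero (fun n => (inv_pos.2 (hzpos (φ n))).le)
        (g := fun n : ℕ => ((n : ℝ)+1)⁻¹)
      · intro n
        apply inv_anti₀ (by positivity)
        calc ((n : ℝ) + 1) ≤ (φ n : ℝ) + 1 := by
              exact_mod_cast add_le_add_left (hφ.le_apply) 1
          _ ≤ ‖z (φ n)‖ := by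
              have h := hynorm (φ n + 1)
              push_cast at h
              show (φ n : ℝ) + 1 ≤ ‖y ((φ n : ℝ)+1)‖
              linarith
      · exact tendsto_one_div_add_atTop_nhds_zero_nat.congr (by intro n; simp [one_div])
    have hnegcl : -v ∈ closure C := by
      have hwC : ∀ n, ‖z (φ n)‖⁻¹ • (x₀ - z (φ n)) ∈ C := fun n =>
        hcone _ (hyS (φ n + 1)).2 _ (inv_pos.2 (hzpos (φ n)))
      refine mem_closure_of_tendsto (b := (Filter.atTop : Filter ℕ)) (f := fun n => ‖z (φ n)‖⁻¹ • (x₀ - z (φ n)))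
        ?_ (Filter.Eventually.of_forall hwC)
      have : (fun n => ‖z (φ n)‖⁻¹ • (x₀ - z (φ n)))
          = fun n => ‖z (φ n)‖⁻¹ • x₀ - u (φ n) := by
        funext n; rw [smul_sub]
      rw [this]
      have h1 : Filter.Tendsto (fun n => ‖z (φ n)‖⁻¹ • x₀) Filter.atTop
          (nhds (0 : Fin k → ℝ)) := by
        simpa using hinv0.smul_const x₀
      simpa using h1.sub hvlim
    exact hline ⟨x₀, v, hvne, fun t => by
      rcases le_or_gt 0 t with ht | ht
      · exact aux_add_smul_closure_mem hopen hconv hcone hx₀ hvcl ht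
      · have := aux_add_smul_closure_mem hopen hconv hcone hx₀ hnegcl (neg_nonneg.2 ht.le)
        simpa [smul_neg, ← neg_smul] using this⟩
end

section
/- Let C ⊆ ℝᵏ (k ≥ 1) be an open convex cone containing no entire affine line, and let x₀ ∈ C. Then the set G = { A : A is an invertible k×k real matrix, A maps C onto C (the image of C under v ↦ A·v equals C), and A·x₀ = x₀ } is a compact subset of the space of k×k real matrices. -/
open Filter Topology Set

/-- For a convex open set `C` with a point `x₀ ∈ C`, the interior of the closure
of `C` is contained in `C`. -/
private lemma aux_int_closure {k : ℕ} {C : Set (Fin k → ℝ)} (hconv : Convex ℝ C)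
    (hopen : IsOpen C) {x₀ : Fin k → ℝ} (hx₀ : x₀ ∈ C) :
    interior (closure C) ⊆ C := by
  intro z hz
  by_cases hzx : z = x₀
  · rwa [hzx]
  obtain ⟨δ, hδ, hball⟩ := Metric.isOpen_iff.mp isOpen_interior z hz
  have hdpos : 0 < ‖z - x₀‖ := by
    simpa [sub_eq_zero] using hzx
  set s : ℝ := δ / (2 * ‖z - x₀‖) with hs
  have hspos : 0 < s := by positivity
  set w := z + s • (z - x₀) with hw
  have hwmem : w ∈ closure C := by
    apply interior_subset
    apply hball
    rw [Metric.mem_ball, dist_eq_norm]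
    have hwz : w - z = s • (z - x₀) := by rw [hw]; abel
    rw [hwz, norm_smul, Real.norm_eq_abs, abs_of_pos hspos, hs]
    have : δ / (2 * ‖z - x₀‖) * ‖z - x₀‖ = δ / 2 := by
      field_simp
    rw [this]; linarith
  have h1s : (0:ℝ) < 1 + s := by linarith
  have hcombo : (s/(1+s)) • x₀ + (1/(1+s)) • w = z := by
    rw [hw]
    match_scalars <;> field_simp <;> ring
  have hmem := hconv.combo_interior_closure_mem_interior
      (x := x₀) (y := w) (a := s/(1+s)) (b := 1/(1+s))
      (by rwa [hopen.interior_eq]) hwmem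
      (by positivity) (by positivity) (by field_simp; ring)
  rw [hcombo, hopen.interior_eq] at hmem
  exact hmem

/-- Let `C ⊆ ℝᵏ` (`k ≥ 1`) be an open convex cone containing no
entire affine line, and let `x₀ ∈ C`. Then the set of invertible `k × k` real
matrices mapping `C` onto `C` and fixing `x₀` is compact. -/
theorem cone_stabilizer_compact (k : ℕ) (hk : 1 ≤ k) (C : Set (Fin k → ℝ))
    (hne : C.Nonempty) (hopen : IsOpen C) (hconv : Convex ℝ C)
    (hcone : ∀ x ∈ C, ∀ t : ℝ, 0 < t → t • x ∈ C)
    (hline : ¬ ∃ p v : Fin k → ℝ, v ≠ 0 ∧ ∀ t : ℝ, p + t • v ∈ C)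
    (x₀ : Fin k → ℝ) (hx₀ : x₀ ∈ C) :
    IsCompact {A : Matrix (Fin k) (Fin k) ℝ |
      IsUnit A ∧ A.mulVec '' C = C ∧ A.mulVec x₀ = x₀} := by
  classical
  set S : Set (Matrix (Fin k) (Fin k) ℝ) :=
    {A | IsUnit A ∧ A.mulVec '' C = C ∧ A.mulVec x₀ = x₀} with hSdef
  show IsCompact S
  -- inverses of elements of `S` belong to `S`
  have hinvmem : ∀ A ∈ S, (A⁻¹ ∈ S ∧ (∀ x, A⁻¹.mulVec (A.mulVec x) = x) ∧
      (∀ x, A.mulVec (A⁻¹.mulVec x) = x)) := by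
    rintro A ⟨hU, hC, hx⟩
    have hd : IsUnit A.det := A.isUnit_iff_isUnit_det.mp hU
    have h1 : A⁻¹ * A = 1 := A.nonsing_inv_mul hd
    have h2 : A * A⁻¹ = 1 := A.mul_nonsing_inv hd
    have hIA : ∀ x, A⁻¹.mulVec (A.mulVec x) = x := fun x => by
      rw [Matrix.mulVec_mulVec, h1, Matrix.one_mulVec]
    have hAI : ∀ x, A.mulVec (A⁻¹.mulVec x) = x := fun x => by
      rw [Matrix.mulVec_mulVec, h2, Matrix.one_mulVec]
    refine ⟨⟨⟨⟨A⁻¹, A, h1, h2⟩, rfl⟩, ?_, ?_⟩, hIA, hAI⟩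
    · apply Set.Subset.antisymm
      · rintro z ⟨c, hc, rfl⟩
        rw [← hC] at hc
        obtain ⟨y, hy, rfl⟩ := hc
        rwa [hIA y]
      · intro c hc
        refine ⟨A.mulVec c, ?_, hIA c⟩
        rw [← hC]; exact Set.mem_image_of_mem _ hc
    · conv_lhs => rw [← hx]
      exact hIA x₀
  -- the set `K = C ∩ (x₀ - C)` is bounded
  have hKbound : ∃ R : ℝ, 0 < R ∧ ∀ y, y ∈ C → x₀ - y ∈ C → ‖y‖ ≤ R := by
    by_contra hcon
    push_neg at hcon
    have hseq : ∀ n : ℕ, ∃ y, y ∈ C ∧ x₀ - y ∈ C ∧ ((n : ℝ) + 1) < ‖y‖ := by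
      intro n
      obtain ⟨y, h1, h2, h3⟩ := hcon ((n : ℝ) + 1) (by positivity)
      exact ⟨y, h1, h2, h3⟩
    choose y hyC hyC' hybig using hseq
    have hypos : ∀ n, 0 < ‖y n‖ := fun n => lt_of_le_of_lt (by positivity) (hybig n)
    set u : ℕ → Fin k → ℝ := fun n => ‖y n‖⁻¹ • y n with hu
    have husph : ∀ n, u n ∈ Metric.sphere (0 : Fin k → ℝ) 1 := by
      intro n
      rw [mem_sphere_zero_iff_norm, hu]
      rw [norm_smul, Real.norm_eq_abs, abs_of_pos (inv_pos.mpr (hypos n)),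
        inv_mul_cancel₀ (hypos n).ne']
    obtain ⟨v, hvsph, φ, hφ, hulim⟩ :=
      (isCompact_sphere (0 : Fin k → ℝ) 1).tendsto_subseq husph
    have hulim' : Tendsto (fun n => u (φ n)) atTop (𝓝 v) := hulim
    have hvnorm : ‖v‖ = 1 := mem_sphere_zero_iff_norm.mp hvsph
    have hynφ : ∀ n : ℕ, (n : ℝ) + 1 ≤ ‖y (φ n)‖ := by
      intro n
      refine le_trans ?_ (hybig (φ n)).le
      have : (n : ℝ) ≤ (φ n : ℝ) := by exact_mod_cast hφ.le_apply
      linarith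
    have hYtop : Tendsto (fun n => ‖y (φ n)‖) atTop atTop :=
      tendsto_atTop_mono hynφ
        (tendsto_atTop_add_const_right _ 1 tendsto_natCast_atTop_atTop)
    have hstend : ∀ t : ℝ, Tendsto (fun n => t / ‖y (φ n)‖) atTop (𝓝 0) := by
      intro t
      have := hYtop.inv_tendsto_atTop.const_mul t
      simpa [div_eq_mul_inv] using this
    have hclos : ∀ t : ℝ, 0 ≤ t →
        x₀ + t • v ∈ closure C ∧ x₀ - t • v ∈ closure C := by
      intro t ht
      have hsn : ∀ n, (t / ‖y (φ n)‖) • y (φ n) = t • u (φ n) := by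
        intro n
        rw [hu, div_eq_mul_inv, mul_smul]
      have hev : ∀ᶠ n in atTop, t / ‖y (φ n)‖ ≤ 1 := by
        filter_upwards [eventually_ge_atTop ⌈t⌉₊] with n hn
        have h1 : t ≤ (n : ℝ) := le_trans (Nat.le_ceil t) (by exact_mod_cast hn)
        have h2 : t ≤ ‖y (φ n)‖ := le_trans h1 (by linarith [hynφ n])
        exact div_le_one_of_le₀ h2 (hypos _).le
      have hsnonneg : ∀ n, 0 ≤ t / ‖y (φ n)‖ := fun n => by positivity
      have hmem1 : ∀ᶠ n in atTop,
          (1 - t / ‖y (φ n)‖) • x₀ + (t / ‖y (φ n)‖) • y (φ n) ∈ C := by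
        filter_upwards [hev] with n hn
        exact hconv hx₀ (hyC _) (by linarith) (hsnonneg n) (by ring)
      have hmem2 : ∀ᶠ n in atTop,
          (1 - t / ‖y (φ n)‖) • x₀ + (t / ‖y (φ n)‖) • (x₀ - y (φ n)) ∈ C := by
        filter_upwards [hev] with n hn
        exact hconv hx₀ (hyC' _) (by linarith) (hsnonneg n) (by ring)
      have h1 : Tendsto (fun n => (1 - t / ‖y (φ n)‖) • x₀) atTop (𝓝 x₀) := by
        have := ((tendsto_const_nhds (x := (1:ℝ))).sub (hstend t)).smul_const x₀
        simpa using this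
      have h2 : Tendsto (fun n => (t / ‖y (φ n)‖) • y (φ n)) atTop (𝓝 (t • v)) := by
        simp only [hsn]
        exact hulim'.const_smul t
      constructor
      · refine mem_closure_of_tendsto ?_ hmem1
        simpa using h1.add h2
      · refine mem_closure_of_tendsto ?_ hmem2
        have h3 : Tendsto (fun n => (t / ‖y (φ n)‖) • x₀) atTop (𝓝 0) := by
          have := (hstend t).smul_const x₀
          simpa using this
        have h4 := h1.add (h3.sub h2)
        simp only [zero_sub] at h4
        have heq : (fun n => (1 - t / ‖y (φ n)‖) • x₀ +
            ((t / ‖y (φ n)‖) • x₀ - (t / ‖y (φ n)‖) • y (φ n))) =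
            fun n => (1 - t / ‖y (φ n)‖) • x₀ + (t / ‖y (φ n)‖) • (x₀ - y (φ n)) := by
          funext n; rw [smul_sub]
        rw [heq] at h4
        simpa [sub_eq_add_neg] using h4
    have hclo' : ∀ t : ℝ, x₀ + t • v ∈ closure C := by
      intro t
      rcases le_or_gt 0 t with ht | ht
      · exact (hclos t ht).1
      · have := (hclos (-t) (by linarith)).2
        have heq : x₀ - (-t) • v = x₀ + t • v := by
          rw [neg_smul, sub_neg_eq_add]
        rwa [heq] at this
    apply hline
    refine ⟨x₀, v, fun h => by simp [h] at hvnorm, ?_⟩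
    intro t
    have h2t := hclo' (2 * t)
    have hmem := hconv.combo_interior_closure_mem_interior
        (x := x₀) (y := x₀ + (2 * t) • v) (by rwa [hopen.interior_eq]) h2t
        (a := 1/2) (b := 1/2) (by norm_num) (by norm_num) (by norm_num)
    rw [hopen.interior_eq] at hmem
    have heq : (1/2 : ℝ) • x₀ + (1/2 : ℝ) • (x₀ + (2 * t) • v) = x₀ + t • v := by
      match_scalars <;> ring
    rwa [heq] at hmem
  obtain ⟨R, hR, hRle⟩ := hKbound
  -- a ball around `x₀ / 2` inside `K`
  have hKopen : IsOpen (C ∩ ((fun y => x₀ - y) ⁻¹' C)) :=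
    hopen.inter (hopen.preimage (continuous_const.sub continuous_id))
  have hx₀2C : (2⁻¹ : ℝ) • x₀ ∈ C := hcone x₀ hx₀ _ (by norm_num)
  have hx₀2mem : (2⁻¹ : ℝ) • x₀ ∈ C ∩ ((fun y => x₀ - y) ⁻¹' C) := by
    refine ⟨hx₀2C, ?_⟩
    have : x₀ - (2⁻¹ : ℝ) • x₀ = (2⁻¹ : ℝ) • x₀ := by
      match_scalars; ring
    simpa [this] using hx₀2C
  obtain ⟨ε, hε, hball⟩ := Metric.isOpen_iff.mp hKopen _ hx₀2mem
  set M : ℝ := (R + ‖x₀‖) / (ε / 2) with hM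
  have hMpos : 0 < M := by
    have : 0 < R + ‖x₀‖ := by positivity
    positivity
  -- entries of matrices in `S` are bounded by `M`
  have hSbound : ∀ A ∈ S, ∀ i j, |A i j| ≤ M := by
    rintro A ⟨hU, hC, hx⟩ i j
    have hmapK : ∀ z, z ∈ C → x₀ - z ∈ C →
        A.mulVec z ∈ C ∧ x₀ - A.mulVec z ∈ C := by
      intro z h1 h2
      constructor
      · rw [← hC]; exact Set.mem_image_of_mem _ h1
      · have : x₀ - A.mulVec z = A.mulVec (x₀ - z) := by
          rw [Matrix.mulVec_sub, hx]
        rw [this, ← hC]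
        exact Set.mem_image_of_mem _ h2
    set p : Fin k → ℝ := (2⁻¹ : ℝ) • x₀ + Pi.single j (ε/2) with hp
    have hpball : p ∈ Metric.ball ((2⁻¹ : ℝ) • x₀) ε := by
      rw [Metric.mem_ball, dist_eq_norm, hp, add_sub_cancel_left, Pi.norm_single,
        Real.norm_eq_abs, abs_of_pos (by linarith)]
      linarith
    have hpK := hball hpball
    obtain ⟨hApC, hApC'⟩ := hmapK p hpK.1 hpK.2
    have hApnorm : ‖A.mulVec p‖ ≤ R := hRle _ hApC hApC'
    have hAx₀2 : A.mulVec ((2⁻¹ : ℝ) • x₀) = (2⁻¹ : ℝ) • x₀ := by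
      rw [Matrix.mulVec_smul, hx]
    have hAp : A.mulVec p = (2⁻¹ : ℝ) • x₀ + A.mulVec (Pi.single j (ε/2)) := by
      rw [hp, Matrix.mulVec_add, hAx₀2]
    have hsingle : A.mulVec (Pi.single j (ε/2)) = fun i => A i j * (ε/2) :=
      Matrix.mulVec_single A j (ε/2)
    have hle1 : |A i j * (ε/2)| ≤ ‖A.mulVec (Pi.single j (ε/2))‖ := by
      have h6 := norm_le_pi_norm (A.mulVec (Pi.single j (ε/2))) i
      calc |A i j * (ε/2)| = ‖(A.mulVec (Pi.single j (ε/2))) i‖ := by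
            simp only [hsingle, Real.norm_eq_abs]
        _ ≤ ‖A.mulVec (Pi.single j (ε/2))‖ := h6
    have hle2 : ‖A.mulVec (Pi.single j (ε/2))‖ ≤ R + ‖x₀‖ := by
      have h5 : A.mulVec (Pi.single j (ε/2)) = A.mulVec p - (2⁻¹ : ℝ) • x₀ := by
        rw [hAp]; abel
      rw [h5]
      calc ‖A.mulVec p - (2⁻¹ : ℝ) • x₀‖ ≤ ‖A.mulVec p‖ + ‖(2⁻¹ : ℝ) • x₀‖ :=
            norm_sub_le _ _
        _ ≤ R + ‖x₀‖ := by
            have : ‖(2⁻¹ : ℝ) • x₀‖ ≤ ‖x₀‖ := by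
              rw [norm_smul, Real.norm_eq_abs,
                abs_of_pos (by norm_num : (0:ℝ) < 2⁻¹)]
              linarith [norm_nonneg x₀]
            linarith
    have hfin : |A i j| * (ε/2) ≤ R + ‖x₀‖ := by
      have : |A i j * (ε/2)| = |A i j| * (ε/2) := by
        rw [abs_mul, abs_of_pos (by linarith : (0:ℝ) < ε/2)]
      linarith [le_trans hle1 hle2, this ▸ le_trans hle1 hle2]
    rw [hM, le_div_iff₀ (by linarith : (0:ℝ) < ε/2)]
    exact hfin
  -- the compact box `T`
  set T : Set (Matrix (Fin k) (Fin k) ℝ) :=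
    {A | ∀ i j, A i j ∈ Set.Icc (-M) M} with hT
  have hTcpt : IsCompact T := by
    have h : IsCompact (Set.univ.pi fun _ : Fin k =>
        Set.univ.pi fun _ : Fin k => Set.Icc (-M) M : Set (Fin k → Fin k → ℝ)) :=
      isCompact_univ_pi fun _ => isCompact_univ_pi fun _ => isCompact_Icc
    suffices hTeq : T = (Set.univ.pi fun _ : Fin k =>
        Set.univ.pi fun _ : Fin k => Set.Icc (-M) M : Set (Fin k → Fin k → ℝ)) by
      rw [hTeq]; exact h
    ext A
    constructor
    · intro hA i _ j _; exact hA i j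
    · intro hA i j; exact hA i (Set.mem_univ i) j (Set.mem_univ j)
  have hST : S ⊆ T := by
    intro A hA i j
    rw [Set.mem_Icc, ← abs_le]
    exact hSbound A hA i j
  -- determinant bound
  have hTne : T.Nonempty := ⟨0, fun i j => by simp [hMpos.le]⟩
  obtain ⟨A₀, hA₀T, hDle'⟩ := hTcpt.exists_isMaxOn hTne
    ((continuous_abs.comp (continuous_id.matrix_det)).continuousOn)
  have hDle : ∀ X ∈ T, |Matrix.det X| ≤ |A₀.det| := fun X hX => hDle' hX
  set D : ℝ := |A₀.det| with hD
  have hdetS : ∀ A ∈ S, 1 ≤ |A.det| * D := by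
    intro A hA
    obtain ⟨hAinvS, _, _⟩ := hinvmem A hA
    have h1 : |A⁻¹.det| ≤ D := hDle _ (hST hAinvS)
    have h2 : A.det * A⁻¹.det = 1 := by
      rw [← Matrix.det_mul, A.mul_nonsing_inv
        (A.isUnit_iff_isUnit_det.mp hA.1), Matrix.det_one]
    have h3 : |A.det| * |A⁻¹.det| = 1 := by
      rw [← abs_mul, h2, abs_one]
    nlinarith [abs_nonneg A.det, abs_nonneg A⁻¹.det]
  have honeS : (1 : Matrix (Fin k) (Fin k) ℝ) ∈ S := by
    refine ⟨isUnit_one, ?_, Matrix.one_mulVec x₀⟩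
    have : (1 : Matrix (Fin k) (Fin k) ℝ).mulVec = id := funext Matrix.one_mulVec
    rw [this, Set.image_id]
  have hDpos : 0 < D := by
    have := hdetS 1 honeS
    rw [Matrix.det_one, abs_one, one_mul] at this
    linarith
  -- mapping into closure implies mapping into C, for invertible matrices
  have himg : ∀ X : Matrix (Fin k) (Fin k) ℝ, IsUnit X →
      (∀ c ∈ C, X.mulVec c ∈ closure C) → X.mulVec '' C ⊆ C := by
    intro X hX hsub
    have hd : IsUnit X.det := X.isUnit_iff_isUnit_det.mp hX
    have h1 : X⁻¹ * X = 1 := X.nonsing_inv_mul hd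
    have h2 : X * X⁻¹ = 1 := X.mul_nonsing_inv hd
    have hIX : ∀ x, X⁻¹.mulVec (X.mulVec x) = x := fun x => by
      rw [Matrix.mulVec_mulVec, h1, Matrix.one_mulVec]
    have hXI : ∀ x, X.mulVec (X⁻¹.mulVec x) = x := fun x => by
      rw [Matrix.mulVec_mulVec, h2, Matrix.one_mulVec]
    have heq : X.mulVec '' C = X⁻¹.mulVec ⁻¹' C := by
      ext z
      constructor
      · rintro ⟨c, hc, rfl⟩
        show X⁻¹.mulVec (X.mulVec c) ∈ C
        rwa [hIX c]
      · intro hz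
        exact ⟨X⁻¹.mulVec z, hz, hXI z⟩
    have hopen' : IsOpen (X.mulVec '' C) := by
      rw [heq]
      exact hopen.preimage (continuous_const.matrix_mulVec continuous_id)
    have hsub' : X.mulVec '' C ⊆ interior (closure C) := by
      apply interior_maximal _ hopen'
      rintro z ⟨c, hc, rfl⟩
      exact hsub c hc
    exact hsub'.trans (aux_int_closure hconv hopen hx₀)
  -- S is closed
  have hScl : IsClosed S := by
    rw [← isOpen_compl_iff, isOpen_iff_mem_nhds]
    by_contra hcl
    push_neg at hcl
    obtain ⟨A, hAc, hAnh⟩ := hcl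
    have hAclos : A ∈ closure S := by
      rw [mem_closure_iff_nhds]
      intro t ht
      by_contra hemp
      push_neg at hemp
      apply hAnh
      rw [mem_nhds_iff] at ht ⊢
      obtain ⟨s, hst, hso, hAs⟩ := ht
      refine ⟨s, ?_, hso, hAs⟩
      intro x hx
      by_contra hxS
      rw [Set.notMem_compl_iff] at hxS
      rw [Set.eq_empty_iff_forall_notMem] at hemp
      exact hemp x ⟨hst hx, hxS⟩
    apply hAc
    letI : FrechetUrysohnSpace (Matrix (Fin k) (Fin k) ℝ) :=
      inferInstanceAs (FrechetUrysohnSpace (Fin k → Fin k → ℝ))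
    obtain ⟨B, hBS, hBlim⟩ := mem_closure_iff_seq_limit.mp hAclos
    have hdetlim : Tendsto (fun n => (B n).det) atTop (𝓝 A.det) :=
      ((continuous_id.matrix_det).tendsto A).comp hBlim
    have hDlow : ∀ n, 1/D ≤ |(B n).det| := by
      intro n
      rw [div_le_iff₀ hDpos]
      exact hdetS _ (hBS n)
    have h1D : 1/D ≤ |A.det| :=
      ge_of_tendsto hdetlim.abs (Filter.Eventually.of_forall hDlow)
    have hdetne : A.det ≠ 0 := by
      intro h
      rw [h, abs_zero] at h1D
      have : (0:ℝ) < 1/D := by positivity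
      linarith
    have hUnit : IsUnit A := A.isUnit_iff_isUnit_det.mpr (isUnit_iff_ne_zero.mpr hdetne)
    have hmvlim : ∀ w : Fin k → ℝ,
        Tendsto (fun n => (B n).mulVec w) atTop (𝓝 (A.mulVec w)) := fun w =>
      ((continuous_id.matrix_mulVec continuous_const).tendsto A).comp hBlim
    have hx0 : A.mulVec x₀ = x₀ := by
      have hconst : (fun n => (B n).mulVec x₀) = fun _ => x₀ :=
        funext fun n => (hBS n).2.2
      have := hmvlim x₀
      rw [hconst] at this
      exact (tendsto_nhds_unique tendsto_const_nhds this).symm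
    have hinvlim : Tendsto (fun n => (B n)⁻¹) atTop (𝓝 A⁻¹) := by
      refine ((continuousAt_matrix_inv A ?_).tendsto).comp hBlim
      rw [Ring.inverse_eq_inv']
      exact continuousAt_inv₀ hdetne
    have hsub1 : ∀ c ∈ C, A.mulVec c ∈ closure C := by
      intro c hc
      refine mem_closure_of_tendsto (hmvlim c) (Filter.Eventually.of_forall fun n => ?_)
      rw [← (hBS n).2.1]
      exact Set.mem_image_of_mem _ hc
    have hsub2 : ∀ c ∈ C, A⁻¹.mulVec c ∈ closure C := by
      intro c hc
      have hlim : Tendsto (fun n => ((B n)⁻¹).mulVec c) atTop (𝓝 (A⁻¹.mulVec c)) :=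
        ((continuous_id.matrix_mulVec continuous_const).tendsto A⁻¹).comp hinvlim
      refine mem_closure_of_tendsto hlim (Filter.Eventually.of_forall fun n => ?_)
      have hBinvS := (hinvmem _ (hBS n)).1
      rw [← hBinvS.2.1]
      exact Set.mem_image_of_mem _ hc
    have hAC : A.mulVec '' C ⊆ C := himg A hUnit hsub1
    have hUnitInv : IsUnit A⁻¹ :=
      ⟨⟨A⁻¹, A, A.nonsing_inv_mul (A.isUnit_iff_isUnit_det.mp hUnit), A.mul_nonsing_inv (A.isUnit_iff_isUnit_det.mp hUnit)⟩, rfl⟩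
    have hAinvC : A⁻¹.mulVec '' C ⊆ C := himg A⁻¹ hUnitInv hsub2
    have hCA : C ⊆ A.mulVec '' C := by
      intro c hc
      have h3 : A⁻¹.mulVec c ∈ C := hAinvC (Set.mem_image_of_mem _ hc)
      refine ⟨A⁻¹.mulVec c, h3, ?_⟩
      rw [Matrix.mulVec_mulVec, A.mul_nonsing_inv (A.isUnit_iff_isUnit_det.mp hUnit),
        Matrix.one_mulVec]
    exact ⟨hUnit, Set.Subset.antisymm hAC hCA, hx0⟩
  exact hTcpt.of_isClosed_subset hScl hST
end

section
/- Let m ≥ 1 be an integer, and let H₁, H₂ be Hermitian m×m complex matrices (Hᵢᴴ = Hᵢ) such that H₁ is positive definite and H₂ is not a real scalar multiple of H₁. Then the real vector space { A : A is an m×m complex matrix with H₁·A = Aᴴ·H₁ and H₂·A = Aᴴ·H₂ } has real dimension (finrank over ℝ) at most m² − 2. -/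
open Matrix

/-- The real vector space of `m × m` complex matrices that are Hermitian with
respect to both Hermitian forms given by the matrices `H₁` and `H₂`, i.e.
matrices `A` with `H₁·A = Aᴴ·H₁` and `H₂·A = Aᴴ·H₂`. -/
noncomputable def doublyHermitianSubmodule (m : ℕ) (H₁ H₂ : Matrix (Fin m) (Fin m) ℂ) :
    Submodule ℝ (Matrix (Fin m) (Fin m) ℂ) where
  carrier := {A | H₁ * A = Aᴴ * H₁ ∧ H₂ * A = Aᴴ * H₂}
  add_mem' := by
    rintro A B ⟨hA1, hA2⟩ ⟨hB1, hB2⟩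
    constructor
    · rw [Matrix.mul_add, conjTranspose_add, Matrix.add_mul, hA1, hB1]
    · rw [Matrix.mul_add, conjTranspose_add, Matrix.add_mul, hA2, hB2]
  zero_mem' := by simp
  smul_mem' := by
    rintro r A ⟨hA1, hA2⟩
    constructor
    · rw [Matrix.mul_smul, conjTranspose_smul, star_trivial, Matrix.smul_mul, hA1]
    · rw [Matrix.mul_smul, conjTranspose_smul, star_trivial, Matrix.smul_mul, hA2]

/-! ### Auxiliary material: the submodule of Hermitian matrices and its dimension -/

/-- The submodule of Hermitian matrices. -/
noncomputable def hermSubmodule (m : ℕ) : Submodule ℝ (Matrix (Fin m) (Fin m) ℂ) where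
  carrier := {A | Aᴴ = A}
  add_mem' := by
    rintro A B (hA : Aᴴ = A) (hB : Bᴴ = B)
    show (A + B)ᴴ = A + B
    rw [conjTranspose_add, hA, hB]
  zero_mem' := by
    show (0 : Matrix (Fin m) (Fin m) ℂ)ᴴ = 0
    simp
  smul_mem' := by
    rintro r A (hA : Aᴴ = A)
    show (r • A)ᴴ = r • A
    rw [conjTranspose_smul, star_trivial, hA]

lemma mem_hermSubmodule {m : ℕ} {A : Matrix (Fin m) (Fin m) ℂ} :
    A ∈ hermSubmodule m ↔ Aᴴ = A := Iff.rfl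

/-- Decomposition map realizing matrices as `X + i Y` with `X, Y` Hermitian. -/
noncomputable def hermProdMap (m : ℕ) :
    (hermSubmodule m × hermSubmodule m) →ₗ[ℝ] Matrix (Fin m) (Fin m) ℂ :=
  (hermSubmodule m).subtype.comp (LinearMap.fst ℝ _ _) +
    (Complex.I • LinearMap.id (R := ℝ) (M := Matrix (Fin m) (Fin m) ℂ)).comp
      ((hermSubmodule m).subtype.comp (LinearMap.snd ℝ _ _))

lemma hermProdMap_apply (m : ℕ) (X Y : hermSubmodule m) :
    hermProdMap m (X, Y)
      = (X : Matrix (Fin m) (Fin m) ℂ) + Complex.I • (Y : Matrix (Fin m) (Fin m) ℂ) := rfl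

lemma hermProdMap_bijective (m : ℕ) : Function.Bijective (hermProdMap m) := by
  constructor
  · rw [← LinearMap.ker_eq_bot, LinearMap.ker_eq_bot']
    rintro ⟨X, Y⟩ h
    rw [hermProdMap_apply] at h
    have hX : (X : Matrix (Fin m) (Fin m) ℂ)ᴴ = X := X.2
    have hY : (Y : Matrix (Fin m) (Fin m) ℂ)ᴴ = Y := Y.2
    have h2 := congrArg conjTranspose h
    rw [conjTranspose_add, conjTranspose_smul, hX, hY, conjTranspose_zero,
      show (star Complex.I : ℂ) = -Complex.I by simp] at h2
    have hXz : (X : Matrix (Fin m) (Fin m) ℂ) = 0 := by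
      have hs : (X : Matrix (Fin m) (Fin m) ℂ) + Complex.I • (Y : Matrix (Fin m) (Fin m) ℂ)
          + ((X : Matrix (Fin m) (Fin m) ℂ)
            + (-Complex.I) • (Y : Matrix (Fin m) (Fin m) ℂ)) = 0 := by
        rw [h, h2, add_zero]
      have h2X : (2 : ℂ) • (X : Matrix (Fin m) (Fin m) ℂ) = 0 := by
        rw [two_smul]
        rw [add_add_add_comm, neg_smul, add_neg_cancel, add_zero] at hs
        exact hs
      have := congrArg (fun M => (2 : ℂ)⁻¹ • M) h2X
      simpa [smul_smul] using this
    have hYz : (Y : Matrix (Fin m) (Fin m) ℂ) = 0 := by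
      rw [hXz, zero_add] at h
      have := congrArg (fun M => Complex.I⁻¹ • M) h
      simpa [smul_smul, Complex.I_ne_zero] using this
    ext1
    · exact Subtype.ext hXz
    · exact Subtype.ext hYz
  · intro A
    have hIm : ((-(Complex.I / 2)) • (A - Aᴴ)) ∈ hermSubmodule m := by
      rw [mem_hermSubmodule, conjTranspose_smul, conjTranspose_sub, conjTranspose_conjTranspose,
        show (star (-(Complex.I / 2)) : ℂ) = Complex.I / 2 by simp [Complex.star_def]; ring]
      module
    have hRe : (((2 : ℂ)⁻¹) • (A + Aᴴ)) ∈ hermSubmodule m := by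
      rw [mem_hermSubmodule, conjTranspose_smul, conjTranspose_add, conjTranspose_conjTranspose,
        show (star ((2:ℂ)⁻¹) : ℂ) = (2:ℂ)⁻¹ by simp, add_comm Aᴴ A]
    refine ⟨(⟨_, hRe⟩, ⟨_, hIm⟩), ?_⟩
    rw [hermProdMap_apply]
    show ((2 : ℂ)⁻¹) • (A + Aᴴ) + Complex.I • ((-(Complex.I / 2)) • (A - Aᴴ)) = A
    rw [smul_smul, show Complex.I * (-(Complex.I / 2)) = (2 : ℂ)⁻¹ by
      rw [mul_neg, mul_div_assoc', Complex.I_mul_I]; norm_num]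
    rw [smul_add, smul_sub, ← add_sub_assoc]
    module

lemma finrank_hermSubmodule (m : ℕ) :
    Module.finrank ℝ (hermSubmodule m) = m ^ 2 := by
  have e : (hermSubmodule m × hermSubmodule m) ≃ₗ[ℝ] Matrix (Fin m) (Fin m) ℂ :=
    LinearEquiv.ofBijective (hermProdMap m) (hermProdMap_bijective m)
  have h1 : Module.finrank ℝ (Matrix (Fin m) (Fin m) ℂ) = 2 * m ^ 2 := by
    have := Module.finrank_mul_finrank ℝ ℂ (Matrix (Fin m) (Fin m) ℂ)
    rw [Module.finrank_matrix, Complex.finrank_real_complex] at this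
    simpa [pow_two, Fintype.card_fin] using this.symm
  have h2 := e.finrank_eq
  rw [Module.finrank_prod, h1] at h2
  omega

/-- Action of a rank-one matrix on a vector. -/
lemma vecMulVec_mulVec' {m : ℕ} (a b c : Fin m → ℂ) :
    vecMulVec a b *ᵥ c = (b ⬝ᵥ c) • a := by
  ext k
  simp only [mulVec, dotProduct, vecMulVec_apply, Pi.smul_apply, smul_eq_mul, Finset.sum_mul]
  exact Finset.sum_congr rfl fun l _ => by ring

lemma conjTranspose_vecMulVec {m : ℕ} (a b : Fin m → ℂ) :
    (vecMulVec a b)ᴴ = vecMulVec (star b) (star a) := by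
  ext k l
  simp [conjTranspose_apply, vecMulVec_apply, mul_comm]

open ComplexOrder in
/-- Let `m ≥ 1` and let `H₁, H₂` be Hermitian `m × m` complex
matrices with `H₁` positive definite and `H₂` not a real scalar multiple of
`H₁`. Then the real vector space of matrices `A` satisfying `H₁·A = Aᴴ·H₁` and
`H₂·A = Aᴴ·H₂` has real dimension at most `m² − 2`. -/
theorem doublyHermitian_dim_le (m : ℕ) (hm : 1 ≤ m)
    (H₁ H₂ : Matrix (Fin m) (Fin m) ℂ)
    (hH₁ : H₁ᴴ = H₁) (hH₂ : H₂ᴴ = H₂) (hpos : H₁.PosDef)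
    (hnprop : ¬ ∃ c : ℝ, H₂ = (c : ℂ) • H₁) :
    (Module.finrank ℝ (doublyHermitianSubmodule m H₁ H₂) : ℤ) ≤ (m : ℤ) ^ 2 - 2 := by
  haveI : FiniteDimensional ℝ (Matrix (Fin m) (Fin m) ℂ) :=
    Module.Finite.trans ℂ (Matrix (Fin m) (Fin m) ℂ)
  set S := (open scoped MatrixOrder in CFC.sqrt H₁) with hSdef
  have hS : Sᴴ = S := by
    open scoped MatrixOrder in exact (CFC.sqrt_nonneg H₁).posSemidef.isHermitian
  have hSS : S * S = H₁ := by
    open scoped MatrixOrder in exact CFC.sqrt_mul_sqrt_self H₁ hpos.posSemidef.nonneg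
  have hdet : IsUnit S.det := by
    have hd : S.det * S.det = H₁.det := by rw [← det_mul, hSS]
    have : H₁.det ≠ 0 := hpos.det_pos.ne'
    exact isUnit_of_mul_isUnit_left (by rw [hd]; exact this.isUnit)
  haveI : Invertible S := S.invertibleOfIsUnitDet hdet
  have hSinvH : (S⁻¹)ᴴ = S⁻¹ := by rw [conjTranspose_nonsing_inv, hS]
  set K := S⁻¹ * H₂ * S⁻¹ with hKdef
  have hK : K.IsHermitian := by
    show Kᴴ = K
    rw [hKdef, conjTranspose_mul, conjTranspose_mul, hSinvH, hH₂, Matrix.mul_assoc]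
  have hH2K : H₂ = S * K * S := by
    rw [hKdef]
    simp [Matrix.mul_assoc]
  -- two distinct eigenvalues of K
  obtain ⟨i, j, hij⟩ : ∃ i j, hK.eigenvalues i ≠ hK.eigenvalues j := by
    by_contra hcon
    push_neg at hcon
    set i0 : Fin m := ⟨0, hm⟩
    set c := hK.eigenvalues i0 with hc
    apply hnprop
    refine ⟨c, ?_⟩
    have hdiag : diagonal (RCLike.ofReal ∘ hK.eigenvalues)
        = (c : ℂ) • (1 : Matrix (Fin m) (Fin m) ℂ) := by
      rw [smul_one_eq_diagonal]
      exact congrArg diagonal (funext fun k => by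
        show (Complex.ofReal (hK.eigenvalues k)) = (c : ℂ)
        rw [hcon k i0])
    have hKc : K = (c : ℂ) • (1 : Matrix (Fin m) (Fin m) ℂ) := by
      have hsp := hK.spectral_theorem
      rw [hdiag] at hsp
      rw [hsp, Unitary.conjStarAlgAut_apply, Matrix.mul_smul, Matrix.smul_mul, Matrix.mul_one,
        (Matrix.mem_unitaryGroup_iff).mp (hK.eigenvectorUnitary).2]
    rw [hH2K, hKc, Matrix.mul_smul, Matrix.smul_mul, Matrix.mul_one, hSS]
  have hij' : i ≠ j := fun h => hij (by rw [h])
  -- eigenvector data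
  set u : Fin m → ℂ := ⇑(hK.eigenvectorBasis i) with hu
  set v : Fin m → ℂ := ⇑(hK.eigenvectorBasis j) with hv
  have hKu : K *ᵥ u = hK.eigenvalues i • u := hK.mulVec_eigenvectorBasis i
  have hKv : K *ᵥ v = hK.eigenvalues j • v := hK.mulVec_eigenvectorBasis j
  have hob := hK.eigenvectorBasis.orthonormal
  have hvu : star v ⬝ᵥ u = 0 := by
    have h0 : (inner ℂ (hK.eigenvectorBasis j) (hK.eigenvectorBasis i) : ℂ) = 0 :=
      hob.2 hij'.symm
    rwa [EuclideanSpace.inner_eq_star_dotProduct, dotProduct_comm] at h0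
  have hvv : star v ⬝ᵥ v = 1 := by
    have h1 : (inner ℂ (hK.eigenvectorBasis j) (hK.eigenvectorBasis j) : ℂ) = 1 := by
      rw [inner_self_eq_norm_sq_to_K, hob.1 j]
      norm_num
    rwa [EuclideanSpace.inner_eq_star_dotProduct, dotProduct_comm] at h1
  have huu : star u ⬝ᵥ u = 1 := by
    have h1 : (inner ℂ (hK.eigenvectorBasis i) (hK.eigenvectorBasis i) : ℂ) = 1 := by
      rw [inner_self_eq_norm_sq_to_K, hob.1 i]
      norm_num
    rwa [EuclideanSpace.inner_eq_star_dotProduct, dotProduct_comm] at h1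
  -- the linear functional
  set L : Matrix (Fin m) (Fin m) ℂ →ₗ[ℝ] ℂ :=
    { toFun := fun X => star v ⬝ᵥ (X *ᵥ u)
      map_add' := fun X Y => by simp [add_mulVec, dotProduct_add]
      map_smul' := fun r X => by simp [smul_mulVec, dotProduct_smul] } with hL
  have hLapp : ∀ X : Matrix (Fin m) (Fin m) ℂ, L X = star v ⬝ᵥ (X *ᵥ u) := fun _ => rfl
  set L' : hermSubmodule m →ₗ[ℝ] ℂ := L.comp (hermSubmodule m).subtype with hL'
  -- surjectivity of L'
  have hLsurj : Function.Surjective L' := by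
    have hx1m : (vecMulVec u (star v) + vecMulVec v (star u)) ∈ hermSubmodule m := by
      rw [mem_hermSubmodule, conjTranspose_add, _root_.conjTranspose_vecMulVec,
        _root_.conjTranspose_vecMulVec, star_star, star_star, add_comm]
    have hx2m : (Complex.I • vecMulVec u (star v) - Complex.I • vecMulVec v (star u))
        ∈ hermSubmodule m := by
      rw [mem_hermSubmodule, conjTranspose_sub, conjTranspose_smul, conjTranspose_smul,
        _root_.conjTranspose_vecMulVec, _root_.conjTranspose_vecMulVec, star_star, star_star,
        show (star Complex.I : ℂ) = -Complex.I by simp]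
      module
    have hLx1 : L (vecMulVec u (star v) + vecMulVec v (star u)) = 1 := by
      rw [hLapp, add_mulVec, vecMulVec_mulVec', vecMulVec_mulVec', hvu, huu,
        zero_smul, one_smul, zero_add, hvv]
    have hLx2 : L (Complex.I • vecMulVec u (star v) - Complex.I • vecMulVec v (star u))
        = -Complex.I := by
      rw [hLapp, sub_mulVec, smul_mulVec, smul_mulVec, vecMulVec_mulVec',
        vecMulVec_mulVec', hvu, huu, zero_smul, one_smul, smul_zero, zero_sub,
        dotProduct_neg, dotProduct_smul, hvv]
      simp
    intro z
    refine ⟨z.re • ⟨_, hx1m⟩ + (-z.im) • ⟨_, hx2m⟩, ?_⟩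
    rw [map_add, LinearMap.map_smul, LinearMap.map_smul]
    have e1 : L' ⟨_, hx1m⟩ = 1 := hLx1
    have e2 : L' ⟨_, hx2m⟩ = -Complex.I := hLx2
    rw [e1, e2]
    apply Complex.ext <;> simp [Complex.real_smul]
  -- the conjugation equivalence
  set Φ : Matrix (Fin m) (Fin m) ℂ ≃ₗ[ℝ] Matrix (Fin m) (Fin m) ℂ :=
    { toFun := fun A => S * A * S⁻¹
      invFun := fun X => S⁻¹ * X * S
      map_add' := fun A B => by
        show S * (A + B) * S⁻¹ = S * A * S⁻¹ + S * B * S⁻¹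
        rw [Matrix.mul_add, Matrix.add_mul]
      map_smul' := fun r A => by
        show S * (r • A) * S⁻¹ = r • (S * A * S⁻¹)
        rw [Matrix.mul_smul, Matrix.smul_mul]
      left_inv := fun A => by
        show S⁻¹ * (S * A * S⁻¹) * S = A
        simp only [← Matrix.mul_assoc]
        rw [Matrix.inv_mul_of_invertible, Matrix.one_mul,
          Matrix.inv_mul_cancel_right_of_invertible]
      right_inv := fun X => by
        show S * (S⁻¹ * X * S) * S⁻¹ = X
        simp only [← Matrix.mul_assoc]
        rw [Matrix.mul_inv_of_invertible, Matrix.one_mul,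
          Matrix.mul_inv_cancel_right_of_invertible] } with hPhi
  -- the image of the doubly Hermitian space lands in the kernel of L'
  set V := doublyHermitianSubmodule m H₁ H₂ with hV
  set N : Submodule ℝ (Matrix (Fin m) (Fin m) ℂ) :=
    (LinearMap.ker L').map (hermSubmodule m).subtype with hN
  have hVN : V.map (Φ : Matrix (Fin m) (Fin m) ℂ →ₗ[ℝ] Matrix (Fin m) (Fin m) ℂ) ≤ N := by
    rintro X ⟨A, ⟨hA1, hA2⟩, rfl⟩
    have hXval : (Φ : Matrix (Fin m) (Fin m) ℂ →ₗ[ℝ] Matrix (Fin m) (Fin m) ℂ) A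
        = S * A * S⁻¹ := rfl
    rw [hXval]
    have hSSA : S * S * A = Aᴴ * (S * S) := by rw [hSS]; exact hA1
    have hSA : S * A = S⁻¹ * Aᴴ * (S * S) := by
      calc S * A = S⁻¹ * (S * (S * A)) := by
            rw [Matrix.inv_mul_cancel_left_of_invertible]
        _ = S⁻¹ * (S * S * A) := by rw [Matrix.mul_assoc]
        _ = S⁻¹ * (Aᴴ * (S * S)) := by rw [hSSA]
        _ = S⁻¹ * Aᴴ * (S * S) := by rw [Matrix.mul_assoc]
    -- Hermitian
    have hherm : (S * A * S⁻¹)ᴴ = S * A * S⁻¹ := by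
      rw [conjTranspose_mul, conjTranspose_mul, hSinvH, hS, hSA]
      simp only [← Matrix.mul_assoc]
      rw [Matrix.mul_inv_cancel_right_of_invertible]
    -- commutes with K, hence in the kernel of L
    have hcomm : K * (S * A * S⁻¹) = (S * A * S⁻¹) * K := by
      have e1 : K * (S * A * S⁻¹) = S⁻¹ * (Aᴴ * (H₂ * S⁻¹)) := by
        rw [hKdef]
        simp only [Matrix.mul_assoc, Matrix.inv_mul_cancel_left_of_invertible]
        rw [← Matrix.mul_assoc H₂ A, hA2, Matrix.mul_assoc]
      have e2 : (S * A * S⁻¹) * K = S⁻¹ * (Aᴴ * (H₂ * S⁻¹)) := by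
        rw [hKdef, hSA]
        simp only [Matrix.mul_assoc, Matrix.mul_inv_cancel_left_of_invertible,
          Matrix.inv_mul_cancel_left_of_invertible]
      rw [e1, e2]
    have hker : L (S * A * S⁻¹) = 0 := by
      set X := S * A * S⁻¹ with hX
      have ha : star v ⬝ᵥ ((K * X) *ᵥ u) = hK.eigenvalues j • (star v ⬝ᵥ (X *ᵥ u)) := by
        rw [← mulVec_mulVec, dotProduct_mulVec]
        have hrow : star v ᵥ* K = hK.eigenvalues j • star v := by
          have := star_mulVec K v
          rw [hK] at this
          rw [← this, hKv, star_smul, star_trivial]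
        rw [hrow, smul_dotProduct]
      have hb : star v ⬝ᵥ ((X * K) *ᵥ u) = hK.eigenvalues i • (star v ⬝ᵥ (X *ᵥ u)) := by
        rw [← mulVec_mulVec, hKu, mulVec_smul, dotProduct_smul]
      have hdiff : (hK.eigenvalues j - hK.eigenvalues i) • (star v ⬝ᵥ (X *ᵥ u)) = 0 := by
        rw [sub_smul, ← ha, ← hb, hcomm, sub_self]
      rw [hLapp]
      rcases smul_eq_zero.mp hdiff with h | h
      · exact absurd (by linarith [sub_eq_zero.mp h]) hij
      · exact h
    exact ⟨⟨S * A * S⁻¹, hherm⟩, by simpa [hL'] using hker, rfl⟩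
  -- dimension count
  have hrange : LinearMap.range L' = ⊤ := LinearMap.range_eq_top.mpr hLsurj
  have hkerdim : Module.finrank ℝ (LinearMap.ker L') = m ^ 2 - 2 := by
    have := L'.finrank_range_add_finrank_ker
    rw [hrange, finrank_top, Complex.finrank_real_complex, finrank_hermSubmodule] at this
    omega
  have hm2 : 2 ≤ m ^ 2 := by
    have h2m : 2 ≤ m := by
      have h := Fintype.one_lt_card_iff_nontrivial.mpr (⟨⟨i, j, hij'⟩⟩ : Nontrivial (Fin m))
      simp at h; omega
    nlinarith
  have hfin : Module.finrank ℝ V ≤ m ^ 2 - 2 := by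
    have h1 : Module.finrank ℝ V
        = Module.finrank ℝ (V.map (Φ : Matrix (Fin m) (Fin m) ℂ →ₗ[ℝ] Matrix (Fin m) (Fin m) ℂ)) :=
      (LinearEquiv.finrank_map_eq Φ V).symm
    have h2 : Module.finrank ℝ N = m ^ 2 - 2 := by
      rw [hN, Submodule.finrank_map_subtype_eq, hkerdim]
    calc Module.finrank ℝ V = _ := h1
      _ ≤ Module.finrank ℝ N := Submodule.finrank_mono hVN
      _ = m ^ 2 - 2 := h2
  have hcast : ((m : ℤ)) ^ 2 = ((m ^ 2 : ℕ) : ℤ) := by push_cast; ring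
  rw [hcast]
  omega
end

section
/- Let k ≥ 1 and m ≥ 1 be integers, let C ⊆ ℝᵏ be an open convex cone containing no entire affine line, and let F₁, …, F_k be Hermitian sesquilinear forms on ℂᵐ (so each Fⱼ(z, w) is linear in z, conjugate-linear in w, and satisfies Fⱼ(w, z) = conj(Fⱼ(z, w))). Assume that for every nonzero z ∈ ℂᵐ the vector (F₁(z,z), …, F_k(z,z)) ∈ ℝᵏ lies in closure(C) \ {0}. Then there exists λ = (λ₁, …, λ_k) ∈ ℝᵏ such that the Hermitian form R = λ₁F₁ + ⋯ + λ_kF_k is positive definite, i.e., R(z, z) > 0 for all nonzero z ∈ ℂᵐ. -/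
theorem sesq_expand {m : ℕ} (G : (Fin m → ℂ) →ₗ[ℂ] (Fin m → ℂ) →ₗ⋆[ℂ] ℂ) (z w : Fin m → ℂ) :
    G z w = ∑ a, ∑ b, z a * (starRingEnd ℂ) (w b) * G (Pi.single a 1) (Pi.single b 1) := by
  have hz : z = ∑ a, z a • (Pi.single a (1:ℂ) : Fin m → ℂ) := by
    funext i; simp [Finset.sum_apply, Pi.single_apply]
  have hw : w = ∑ b, w b • (Pi.single b (1:ℂ) : Fin m → ℂ) := by
    funext i; simp [Finset.sum_apply, Pi.single_apply]
  conv_lhs => rw [hz, hw]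
  rw [map_sum]
  simp only [LinearMap.coe_sum, Finset.sum_apply, map_sum, map_smul, LinearMap.smul_apply,
    LinearMap.map_smulₛₗ, smul_eq_mul, map_mul, Finset.mul_sum]
  rw [Finset.sum_comm]
  refine Finset.sum_congr rfl fun a _ => Finset.sum_congr rfl fun b _ => ?_
  ring

theorem isCompact_convexHull_fd {n : ℕ} {K : Set (Fin n → ℝ)} (hK : IsCompact K) :
    IsCompact (convexHull ℝ K) := by
  rcases K.eq_empty_or_nonempty with rfl | ⟨x₀, hx₀⟩
  · simp
  · set g : (Fin (n+1) → ℝ) × (Fin (n+1) → (Fin n → ℝ)) → (Fin n → ℝ) :=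
      fun p => ∑ i, p.1 i • p.2 i with hg
    have hgc : Continuous g := by
      apply continuous_finset_sum
      intro i _
      exact ((continuous_apply i).comp continuous_fst).smul
        ((continuous_apply i).comp continuous_snd)
    have hS : IsCompact ((stdSimplex ℝ (Fin (n+1))) ×ˢ (Set.univ.pi fun _ : Fin (n+1) => K)) :=
      (isCompact_stdSimplex (𝕜 := ℝ) (ι := Fin (n+1))).prod (isCompact_univ_pi fun _ => hK)
    have himg : convexHull ℝ K = g '' ((stdSimplex ℝ (Fin (n+1))) ×ˢ (Set.univ.pi fun _ : Fin (n+1) => K)) := by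
      apply Set.Subset.antisymm
      · intro x hx
        obtain ⟨ι, hι, z, w, hrange, hai, hpos, hsum1, hsumx⟩ :=
          eq_pos_convex_span_of_mem_convexHull hx
        have hcard : Fintype.card ι ≤ n + 1 := by
          refine hai.card_le_finrank_succ.trans ?_
          have h1 : Module.finrank ℝ (vectorSpan ℝ (Set.range z)) ≤
              Module.finrank ℝ (Fin n → ℝ) := Submodule.finrank_le _
          have h2 : Module.finrank ℝ (Fin n → ℝ) = n := by
            simp [Module.finrank_fintype_fun_eq_card]
          omega
        obtain ⟨e⟩ : Nonempty (ι ↪ Fin (n+1)) :=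
          Function.Embedding.nonempty_of_card_le (by simpa using hcard)
        classical
        set w' : Fin (n+1) → ℝ := fun i => if h : ∃ a, e a = i then w h.choose else 0 with hw'
        set z' : Fin (n+1) → (Fin n → ℝ) :=
          fun i => if h : ∃ a, e a = i then z h.choose else x₀ with hz'
        have hwe : ∀ a, w' (e a) = w a := by
          intro a
          have h : ∃ b, e b = e a := ⟨a, rfl⟩
          simp only [hw', dif_pos h]
          congr 1
          exact e.injective h.choose_spec
        have hze : ∀ a, z' (e a) = z a := by
          intro a
          have h : ∃ b, e b = e a := ⟨a, rfl⟩
          simp only [hz', dif_pos h]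
          rw [e.injective h.choose_spec]
        have hgen : ∀ {M : Type} [AddCommMonoid M] (f : Fin (n+1) → M),
            (∀ i, (¬ ∃ a, e a = i) → f i = 0) → ∑ i, f i = ∑ a, f (e a) := by
          intro M _ f hf
          rw [← Finset.sum_map Finset.univ e f]
          refine (Finset.sum_subset (Finset.subset_univ _) ?_).symm
          intro i _ hi
          refine hf i fun ⟨a, ha⟩ => hi (Finset.mem_map.2 ⟨a, Finset.mem_univ _, ha⟩)
        refine ⟨(w', z'), ⟨⟨?_, ?_⟩, ?_⟩, ?_⟩
        · intro i
          by_cases h : ∃ a, e a = i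
          · simp only [hw', dif_pos h]; exact (hpos _).le
          · simp only [hw', dif_neg h]; exact le_refl 0
        · show ∑ i, w' i = 1
          rw [hgen w' (fun i hi => by simp only [hw', dif_neg hi]), ← hsum1]
          exact Finset.sum_congr rfl fun a _ => (hwe a)
        · intro i _
          by_cases h : ∃ a, e a = i
          · simp only [hz', dif_pos h]; exact hrange ⟨_, rfl⟩
          · simp only [hz', dif_neg h]; exact hx₀
        · show ∑ i, w' i • z' i = x
          rw [hgen (fun i => w' i • z' i)
            (fun i hi => by simp only [hw', dif_neg hi, zero_smul]), ← hsumx]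
          exact Finset.sum_congr rfl fun a _ => by rw [hwe a, hze a]
      · rintro x ⟨⟨w, z⟩, ⟨⟨hw0, hw1⟩, hz⟩, rfl⟩
        exact mem_convexHull_of_exists_fintype w z hw0 hw1
          (fun i => hz i (Set.mem_univ i)) rfl
    rw [himg]
    exact hS.image hgc

open ComplexOrder in
/-- Let `C ⊆ ℝᵏ` be an open convex cone containing no entire
affine line, and let `F₁, …, F_k` be Hermitian sesquilinear forms on `ℂᵐ`
(linear in the first argument, conjugate-linear in the second) such that for
every nonzero `z` the vector `(F₁(z,z), …, F_k(z,z))` lies in `closure C \ {0}`.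
Then some real linear combination `R = λ₁F₁ + ⋯ + λ_kF_k` is positive definite. -/
theorem exists_posDef_combination (k m : ℕ) (hk : 1 ≤ k) (hm : 1 ≤ m)
    (C : Set (Fin k → ℝ)) (hne : C.Nonempty) (hopen : IsOpen C) (hconv : Convex ℝ C)
    (hcone : ∀ x ∈ C, ∀ t : ℝ, 0 < t → t • x ∈ C)
    (hline : ¬ ∃ p v : Fin k → ℝ, v ≠ 0 ∧ ∀ t : ℝ, p + t • v ∈ C)
    (F : Fin k → (Fin m → ℂ) →ₗ[ℂ] (Fin m → ℂ) →ₗ⋆[ℂ] ℂ)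
    (hherm : ∀ j, ∀ z w : Fin m → ℂ, F j w z = starRingEnd ℂ (F j z w))
    (hC : ∀ z : Fin m → ℂ, z ≠ 0 →
      (fun j => (F j z z).re) ∈ closure C ∧ (fun j => (F j z z).re) ≠ 0) :
    ∃ lam : Fin k → ℝ, ∀ z : Fin m → ℂ, z ≠ 0 →
      0 < ∑ j, (lam j : ℂ) * F j z z := by
  classical
  obtain ⟨p, hp⟩ := hne
  -- closure facts
  have hCc_smul : ∀ t : ℝ, 0 < t → ∀ x ∈ closure C, t • x ∈ closure C := by
    intro t ht x hx
    exact map_mem_closure (continuous_const_smul t) hx (fun y hy => hcone y hy t ht)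
  have hCc_add : ∀ x ∈ closure C, ∀ y ∈ closure C, x + y ∈ closure C := by
    intro x hx y hy
    refine map_mem_closure₂ continuous_add hx hy ?_
    intro a ha b hb
    have := hconv ha hb (by norm_num : (0:ℝ) ≤ 1/2) (by norm_num : (0:ℝ) ≤ 1/2) (by norm_num)
    have h2 := hcone _ this 2 (by norm_num)
    have : (2:ℝ) • ((1/2:ℝ) • a + (1/2:ℝ) • b) = a + b := by
      rw [smul_add, smul_smul, smul_smul]; norm_num
    rwa [this] at h2
  have hCc0 : (0 : Fin k → ℝ) ∈ closure C := by
    have htend : Filter.Tendsto (fun t : ℝ => t • p) (nhdsWithin 0 (Set.Ioi 0)) (nhds 0) := by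
      have h1 : Filter.Tendsto (fun t : ℝ => t • p) (nhds 0) (nhds ((0:ℝ) • p)) :=
        (continuous_id.smul continuous_const).tendsto 0
      rw [zero_smul] at h1
      exact h1.mono_left nhdsWithin_le_nhds
    refine mem_closure_of_tendsto htend ?_
    filter_upwards [self_mem_nhdsWithin] with t ht
    exact hcone p hp t ht
  have hCc_nneg : ∀ t : ℝ, 0 ≤ t → ∀ x ∈ closure C, t • x ∈ closure C := by
    intro t ht x hx
    rcases ht.lt_or_eq with h | h
    · exact hCc_smul t h x hx
    · rw [← h, zero_smul]; exact hCc0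
  -- C + closure C ⊆ C
  have hadd : ∀ q ∈ C, ∀ r ∈ closure C, q + r ∈ C := by
    intro q hq r hr
    have h2q : (2:ℝ) • q ∈ interior C := by
      rw [hopen.interior_eq]; exact hcone q hq 2 (by norm_num)
    have h2r : (2:ℝ) • r ∈ closure C := hCc_smul 2 (by norm_num) r hr
    have := hconv.combo_interior_closure_mem_interior h2q h2r
      (a := 1/2) (b := 1/2) (by norm_num) (by norm_num) (by norm_num)
    rw [hopen.interior_eq] at this
    have heq : (1/2:ℝ) • ((2:ℝ) • q) + (1/2:ℝ) • ((2:ℝ) • r) = q + r := by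
      rw [smul_smul, smul_smul]; norm_num
    rwa [heq] at this
  -- no opposite pair in closure C
  have hopp : ∀ v : Fin k → ℝ, v ≠ 0 → v ∈ closure C → -v ∈ closure C → False := by
    intro v hv hv1 hv2
    refine hline ⟨p, v, hv, fun t => ?_⟩
    rcases lt_trichotomy t 0 with h | h | h
    · have : t • v = (-t) • (-v) := by rw [neg_smul, smul_neg, neg_neg]
      rw [this]
      exact hadd p hp _ (hCc_smul (-t) (by linarith) _ hv2)
    · simpa [h] using hp
    · exact hadd p hp _ (hCc_smul t h v hv1)
  -- the quadratic map and its continuity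
  set φ : (Fin m → ℂ) → (Fin k → ℝ) := fun z j => (F j z z).re with hφ
  have hφcont : Continuous φ := by
    refine continuous_pi fun j => ?_
    have : (fun z : Fin m → ℂ => (F j z z)) = fun z =>
        ∑ a, ∑ b, z a * (starRingEnd ℂ) (z b) * F j (Pi.single a 1) (Pi.single b 1) := by
      funext z; exact sesq_expand (F j) z z
    have hc : Continuous fun z : Fin m → ℂ => (F j z z) := by
      rw [this]
      refine continuous_finset_sum _ fun a _ => continuous_finset_sum _ fun b _ => ?_
      exact (((continuous_apply a).mul
        (Complex.continuous_conj.comp (continuous_apply b))).mul continuous_const)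
    exact Complex.continuous_re.comp hc
  -- the compact set K
  set K : Set (Fin k → ℝ) := φ '' Metric.sphere (0 : Fin m → ℂ) 1 with hK
  have hKcomp : IsCompact K := (isCompact_sphere 0 1).image hφcont
  have hKsub : K ⊆ closure C := by
    rintro _ ⟨z, hz, rfl⟩
    have hz0 : z ≠ 0 := by
      intro h; rw [mem_sphere_zero_iff_norm, h, norm_zero] at hz; norm_num at hz
    exact (hC z hz0).1
  have hKne0 : ∀ x ∈ K, x ≠ 0 := by
    rintro _ ⟨z, hz, rfl⟩
    have hz0 : z ≠ 0 := by
      intro h; rw [mem_sphere_zero_iff_norm, h, norm_zero] at hz; norm_num at hz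
    exact (hC z hz0).2
  -- 0 is not in the convex hull of K
  have h0hull : (0 : Fin k → ℝ) ∉ convexHull ℝ K := by
    intro h0
    rw [mem_convexHull_iff_exists_fintype] at h0
    obtain ⟨ι, hι, w, x, hw0, hw1, hxK, hsum⟩ := h0
    obtain ⟨i, hi⟩ : ∃ i, 0 < w i := by
      by_contra h
      push_neg at h
      have : ∀ i ∈ Finset.univ, w i = 0 := fun i _ => le_antisymm (h i) (hw0 i)
      rw [Finset.sum_eq_zero this] at hw1
      norm_num at hw1
    have hrest : ∑ j ∈ Finset.univ.erase i, w j • x j ∈ closure C := by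
      refine Finset.sum_induction _ (fun y => y ∈ closure C)
        (fun a b ha hb => hCc_add a ha b hb) hCc0 ?_
      intro j _
      exact hCc_nneg (w j) (hw0 j) (x j) (hKsub (hxK j))
    have hsplit : w i • x i + ∑ j ∈ Finset.univ.erase i, w j • x j = 0 := by
      rw [← hsum]
      exact Finset.add_sum_erase _ (fun j => w j • x j) (Finset.mem_univ i)
    have hneg : -(x i) ∈ closure C := by
      have : -(x i) = (w i)⁻¹ • (∑ j ∈ Finset.univ.erase i, w j • x j) := by
        have h1 : ∑ j ∈ Finset.univ.erase i, w j • x j = -(w i • x i) :=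
          eq_neg_of_add_eq_zero_right hsplit
        rw [h1, smul_neg, smul_smul, inv_mul_cancel₀ hi.ne', one_smul]
      rw [this]
      exact hCc_smul _ (inv_pos.2 hi) _ hrest
    exact hopp (x i) (hKne0 _ (hxK i)) (hKsub (hxK i)) hneg
  -- separation
  have hhullcomp : IsCompact (convexHull ℝ K) := isCompact_convexHull_fd hKcomp
  obtain ⟨f, u, hu0, hu⟩ := geometric_hahn_banach_point_closed
    (convex_convexHull ℝ K) hhullcomp.isClosed h0hull
  rw [map_zero] at hu0
  -- positivity of f on φ z for z ≠ 0
  have hfpos : ∀ z : Fin m → ℂ, z ≠ 0 → 0 < f (φ z) := by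
    intro z hz
    have hr : (0:ℝ) < ‖z‖ := norm_pos_iff.2 hz
    set z' : Fin m → ℂ := ‖z‖⁻¹ • z with hz'
    have hz'mem : z' ∈ Metric.sphere (0 : Fin m → ℂ) 1 := by
      rw [mem_sphere_zero_iff_norm, hz', norm_smul, norm_inv, norm_norm,
        inv_mul_cancel₀ hr.ne']
    have hzz' : z = ‖z‖ • z' := by
      rw [hz', smul_smul, mul_inv_cancel₀ hr.ne', one_smul]
    have h1 : (‖z‖ : ℝ) • z' = ((‖z‖ : ℂ)) • z' := by
      funext i; simp [Complex.real_smul]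
    have key : ∀ j, F j z z = (((‖z‖ * ‖z‖ : ℝ)) : ℂ) * F j z' z' := by
      intro j
      conv_lhs => rw [hzz', h1]
      rw [(F j).map_smul, LinearMap.smul_apply, (F j z').map_smulₛₗ,
        Complex.conj_ofReal, smul_eq_mul, smul_eq_mul]
      push_cast
      ring
    have hφscale : φ z = (‖z‖ * ‖z‖) • φ z' := by
      funext j
      rw [hφ]
      simp only [Pi.smul_apply, smul_eq_mul]
      rw [key j, Complex.re_ofReal_mul]
    have hmem : φ z' ∈ convexHull ℝ K := subset_convexHull ℝ K ⟨z', hz'mem, rfl⟩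
    have hfz' := hu _ hmem
    rw [hφscale, map_smul, smul_eq_mul]
    exact mul_pos (mul_pos hr hr) (hu0.trans hfz')
  -- the final linear combination
  refine ⟨fun j => f (Pi.single j 1), fun z hz => ?_⟩
  have him : ∀ j, (F j z z).im = 0 := by
    intro j
    have := hherm j z z
    exact Complex.conj_eq_iff_im.1 this.symm
  have hfre : ∀ j, F j z z = ((F j z z).re : ℂ) := by
    intro j
    exact (Complex.conj_eq_iff_re.1 (hherm j z z).symm).symm
  have hsum : ∑ j, ((f (Pi.single j 1) : ℝ) : ℂ) * F j z z = ((f (φ z) : ℝ) : ℂ) := by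
    have hrepr : f (φ z) = ∑ j, φ z j * f (Pi.single j 1) := by
      have hzdec : φ z = ∑ j, φ z j • (Pi.single j (1:ℝ) : Fin k → ℝ) := by
        funext i; simp [Finset.sum_apply, Pi.single_apply]
      conv_lhs => rw [hzdec]
      rw [map_sum]
      exact Finset.sum_congr rfl fun j _ => by rw [map_smul, smul_eq_mul]
    rw [hrepr]
    push_cast
    refine Finset.sum_congr rfl fun j _ => ?_
    rw [hfre j]
    push_cast
    ring
  rw [hsum]
  exact Complex.zero_lt_real.2 (hfpos z hz)
end
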